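/- arXiv:2403.10116 — 3 statements merged into one kernel-verified Lean document; each statement's English description precedes it below -/
import Mathlib

section
/- Undershoot bound for threshold selection: let D be a finite multiset of integers in {0,...,U} (U a power of 2) with dyadic sub-domain sums S_j = Sum(D ∩ [2^{j-1}+1, 2^j]). Suppose noisy estimates satisfy |S̃_j − S_j| ≤ c·2^j for all j, for some c ≥ 0, and let t be the largest index j with S̃_j > c·2^j (with t = −∞, i.e., τ = 0, if no such j exists). Then for every j > t, the number of elements of D in [2^{j-1}+1, 2^j] is at most 4c (since each such element is at least 2^{j-1} ≥ 2^j/2 and S_j ≤ 2c·2^j), and consequently Σ_{j > t} S_j ≤ 4c · Max(D) · (number of nonempty sub-domains above t) — more precisely, Σ_{j > t} S_j ≤ 2c · Σ_{j > t, j ≤ ⌈log₂ Max(D)⌉} 2^j ≤ 8c · Max(D). -/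
/-!
A block index `j > t` failed the threshold test, so `S̃_j ≤ c·2^j`, and the error bound gives
`S_j ≤ 2c·2^j`. Every element of the `j`-th block exceeds `2^j / 2`, which bounds its size
by `4c`. Blocks with `2^j > 2·Max(D)` are empty, and the remaining powers `2^j ≤ 2·Max(D)` are
distinct, so they sum to at most `4·Max(D)`; hence `Σ_{j > t} S_j ≤ 8c·Max(D)`.
-/

open Finset

theorem Multiset.fold_max_natCast {R : Type} [Semiring R] [LinearOrder R] [IsStrictOrderedRing R]
    (s : Multiset ℕ) : (s : Multiset R).fold max 0 = (s.sup : R) := by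
  rw [show (s : Multiset R) = s.map Nat.cast from Multiset.bind_singleton s _, ← Nat.cast_zero,
    Multiset.sup, Multiset.fold_hom _ (fun x y => Nat.cast_max x y)]
  rfl

theorem Multiset.card_mul_le_two_mul_sum {s : Multiset ℕ} {n : ℕ} (h : ∀ x ∈ s, n / 2 < x) :
    s.card * n ≤ 2 * s.sum := by
  have hsum : s.card * (n / 2 + 1) ≤ s.sum := by
    simpa only [smul_eq_mul] using Multiset.card_nsmul_le_sum (a := n / 2 + 1) h
  calc s.card * n ≤ s.card * (2 * (n / 2 + 1)) := Nat.mul_le_mul_left _ (by omega)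
    _ = 2 * (s.card * (n / 2 + 1)) := by ring
    _ ≤ 2 * s.sum := Nat.mul_le_mul_left _ hsum

theorem Nat.sum_two_pow_filter_le (s : Finset ℕ) (N : ℕ) :
    ∑ j ∈ s with 2 ^ j ≤ N, 2 ^ j ≤ 2 * N := by
  rcases Nat.eq_zero_or_pos N with rfl | hN
  · simp
  have hlt : ∑ j ∈ s with 2 ^ j ≤ N, 2 ^ j < 2 ^ (Nat.log 2 N + 1) :=
    Nat.geomSum_lt le_rfl fun j hj =>
      Nat.lt_succ_of_le (Nat.le_log_of_pow_le one_lt_two (Finset.mem_filter.mp hj).2)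
  have hpow : 2 ^ Nat.log 2 N ≤ N := Nat.pow_log_le_self 2 hN.ne'
  rw [pow_succ] at hlt
  omega

/-- `2 ^ j / 2` is `ℕ`-division, so block `0` is `[1, 1]`. -/
def dyadicBlock (D : Multiset ℕ) (j : ℕ) : Multiset ℕ :=
  D.filter fun x => 2 ^ j / 2 < x ∧ x ≤ 2 ^ j

theorem card_dyadicBlock_mul_le (D : Multiset ℕ) (j : ℕ) :
    (dyadicBlock D j).card * 2 ^ j ≤ 2 * (dyadicBlock D j).sum :=
  Multiset.card_mul_le_two_mul_sum fun _ hx => (Multiset.mem_filter.mp hx).2.1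

theorem dyadicBlock_eq_zero_of_lt (D : Multiset ℕ) {j : ℕ} (hj : 2 * D.sup < 2 ^ j) :
    dyadicBlock D j = 0 :=
  Multiset.filter_eq_nil.mpr fun x hx hxj => by
    have := Multiset.le_sup hx
    omega

theorem sum_dyadicBlock_le (D : Multiset ℕ) {T : Finset ℕ} {c : ℝ} (hc : 0 ≤ c)
    (h : ∀ j ∈ T, ((dyadicBlock D j).sum : ℝ) ≤ 2 * c * 2 ^ j) :
    ∑ j ∈ T, ((dyadicBlock D j).sum : ℝ) ≤ 8 * c * D.sup :=
  calc ∑ j ∈ T, ((dyadicBlock D j).sum : ℝ)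
      = ∑ j ∈ T with 2 ^ j ≤ 2 * D.sup, ((dyadicBlock D j).sum : ℝ) := by
        refine (sum_filter_of_ne fun j _ hj => not_lt.mp fun hlt => hj ?_).symm
        rw [dyadicBlock_eq_zero_of_lt D hlt, Multiset.sum_zero, Nat.cast_zero]
    _ ≤ ∑ j ∈ T with 2 ^ j ≤ 2 * D.sup, 2 * c * 2 ^ j :=
        sum_le_sum fun j hj => h j (mem_filter.mp hj).1
    _ = 2 * c * ((∑ j ∈ T with 2 ^ j ≤ 2 * D.sup, 2 ^ j : ℕ) : ℝ) := by
        push_cast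
        rw [mul_sum]
    _ ≤ 2 * c * ((2 * (2 * D.sup) : ℕ) : ℝ) := by
        gcongr
        exact Nat.sum_two_pow_filter_le _ _
    _ = 8 * c * D.sup := by
        push_cast
        ring

theorem undershoot_bound_general (L : ℕ) (D : Multiset ℕ) (c : ℝ) (hc : 0 ≤ c)
    (Sest : ℕ → ℝ)
    (herr : ∀ j ≤ L,
      |Sest j - ((D.filter (fun x => 2 ^ j / 2 < x ∧ x ≤ 2 ^ j)).sum : ℝ)| ≤ c * 2 ^ j)
    (t : ℤ)
    (ht : ∀ j ≤ L, t < (j : ℤ) → ¬ (c * 2 ^ j < Sest j)) :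
    (∀ j ≤ L, t < (j : ℤ) →
        ((D.filter (fun x => 2 ^ j / 2 < x ∧ x ≤ 2 ^ j)).card : ℝ) ≤ 4 * c) ∧
      (∑ j ∈ (Finset.range (L + 1)).filter (fun (j : ℕ) => t < (j : ℤ)),
          ((D.filter (fun x => 2 ^ j / 2 < x ∧ x ≤ 2 ^ j)).sum : ℝ)) ≤
        8 * c * (D.fold max 0 : ℝ) := by
  have hblock : ∀ j ≤ L, t < (j : ℤ) → ((dyadicBlock D j).sum : ℝ) ≤ 2 * c * 2 ^ j :=
    fun j hj hjt => by
      have hest := (abs_le.mp (herr j hj)).1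
      have hpass := not_lt.mp (ht j hj hjt)
      unfold dyadicBlock
      linarith
  refine ⟨fun j hj hjt => le_of_mul_le_mul_right ?_ (by positivity : (0 : ℝ) < 2 ^ j), ?_⟩
  · change ((dyadicBlock D j).card : ℝ) * 2 ^ j ≤ 4 * c * 2 ^ j
    have hcard : ((dyadicBlock D j).card : ℝ) * 2 ^ j ≤ 2 * (dyadicBlock D j).sum := by
      exact_mod_cast card_dyadicBlock_mul_le D j
    linarith [hblock j hj hjt]
  rw [Multiset.fold_max_natCast]
  refine sum_dyadicBlock_le D hc fun j hj => ?_
  obtain ⟨hjL, hjt⟩ := mem_filter.mp hj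
  exact hblock j (Nat.lt_succ_iff.mp (mem_range.mp hjL)) hjt

/-- Undershoot bound for threshold selection. Let `D` be a nonempty finite
multiset of integers in `{0,...,2^L}` with dyadic sub-domain sums
`S j = Sum(D ∩ [2^(j-1)+1, 2^j])` (in ℕ the interval is `{x | 2^j / 2 < x ∧ x ≤ 2^j}`).
Suppose noisy estimates `Sest j` satisfy `|Sest j − S j| ≤ c·2^j` for all `j ≤ L`, and `t`
is the largest index `j ≤ L` with `Sest j > c·2^j` (`t = -1` representing `−∞`/`τ = 0` if
no such index exists; formally we assume no `j > t` passes the test). Then for every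
`j > t` the number of elements of `D` in the `j`-th interval is at most `4c`, and
`Σ_{j > t} S j ≤ 8·c·Max(D)`. -/
theorem undershoot_bound (L : ℕ) (D : Multiset ℕ) (hne : D ≠ 0)
    (hD : ∀ x ∈ D, x ≤ 2 ^ L) (c : ℝ) (hc : 0 ≤ c)
    (Sest : ℕ → ℝ)
    (herr : ∀ j ≤ L,
      |Sest j - ((D.filter (fun x => 2 ^ j / 2 < x ∧ x ≤ 2 ^ j)).sum : ℝ)| ≤ c * 2 ^ j)
    (t : ℤ)
    (ht : ∀ j ≤ L, t < (j : ℤ) → ¬ (c * 2 ^ j < Sest j)) :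
    (∀ j ≤ L, t < (j : ℤ) →
        ((D.filter (fun x => 2 ^ j / 2 < x ∧ x ≤ 2 ^ j)).card : ℝ) ≤ 4 * c) ∧
      (∑ j ∈ (Finset.range (L + 1)).filter (fun (j : ℕ) => t < (j : ℤ)),
          ((D.filter (fun x => 2 ^ j / 2 < x ∧ x ≤ 2 ^ j)).sum : ℝ)) ≤
        8 * c * (D.fold max 0 : ℝ) :=
  undershoot_bound_general L D c hc Sest herr t ht
end

section
/- No-overshoot for threshold selection: with the setup of the previous lemma, if for every j the estimate satisfies |S̃_j − S_j| ≤ c·2^j, then the selected index t (the largest j with S̃_j > c·2^j) satisfies 2^t ≤ 2·Max(D); i.e., the chosen clipping threshold τ = 2^t never exceeds twice the true maximum of D. -/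
/-!
An estimate within `c·2^t` of the bucket sum `S_t` that exceeds `c·2^t` forces `S_t > 0`, so the
bucket `(2^t/2, 2^t]` contains an element `x` of `D`; then `2^t < 2x ≤ 2·Max(D)`.
-/

theorem pos_of_abs_sub_le_of_lt {α : Type*} [AddCommGroup α] [LinearOrder α]
    [IsOrderedAddMonoid α] {a s b : α} (herr : |a - s| ≤ b) (hlt : b < a) : 0 < s :=
  (sub_pos.mpr hlt).trans_le (sub_le_comm.mp (abs_sub_le_iff.mp herr).1)

theorem le_two_mul_fold_max_of_sum_filter_ne_zero {n : ℕ} {D : Multiset ℕ}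
    (h : (D.filter (fun x => n / 2 < x ∧ x ≤ n)).sum ≠ 0) : n ≤ 2 * D.fold max 0 := by
  have hne : D.filter (fun x => n / 2 < x ∧ x ≤ n) ≠ 0 := fun h0 => h (by rw [h0, Multiset.sum_zero])
  obtain ⟨x, hx⟩ := Multiset.exists_mem_of_ne_zero hne
  obtain ⟨hxD, hlt, -⟩ := Multiset.mem_filter.mp hx
  have hn : n < x * 2 := (Nat.div_lt_iff_lt_mul two_pos).mp hlt
  have hmax : x ≤ D.fold max 0 := Multiset.le_sup hxD
  omega

theorem no_overshoot_general (L : ℕ) (D : Multiset ℕ) (c : ℝ)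
    (Sest : ℕ → ℝ)
    (herr : ∀ j ≤ L,
      |Sest j - ((D.filter (fun x => 2 ^ j / 2 < x ∧ x ≤ 2 ^ j)).sum : ℝ)| ≤ c * 2 ^ j)
    (t : ℕ) (htL : t ≤ L) (hcond : c * 2 ^ t < Sest t) :
    2 ^ t ≤ 2 * D.fold max 0 :=
  le_two_mul_fold_max_of_sum_filter_ne_zero <| Nat.cast_ne_zero.mp
    (pos_of_abs_sub_le_of_lt (herr t htL) hcond).ne'

/-- No-overshoot for threshold selection. With `D` a nonempty finite
multiset of integers in `{0,...,2^L}`, dyadic sub-domain sums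
`S j = Sum(D ∩ [2^(j-1)+1, 2^j])` (in ℕ the interval is `{x | 2^j / 2 < x ∧ x ≤ 2^j}`),
and estimates satisfying `|Sest j − S j| ≤ c·2^j` for all `j ≤ L`: if the selected index
`t ≤ L` satisfies the selection condition `Sest t > c·2^t`, then the chosen clipping
threshold `τ = 2^t` satisfies `2^t ≤ 2·Max(D)`. -/
theorem no_overshoot (L : ℕ) (D : Multiset ℕ) (hne : D ≠ 0)
    (hD : ∀ x ∈ D, x ≤ 2 ^ L) (c : ℝ) (hc : 0 ≤ c)
    (Sest : ℕ → ℝ)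
    (herr : ∀ j ≤ L,
      |Sest j - ((D.filter (fun x => 2 ^ j / 2 < x ∧ x ≤ 2 ^ j)).sum : ℝ)| ≤ c * 2 ^ j)
    (t : ℕ) (htL : t ≤ L) (hcond : c * 2 ^ t < Sest t) :
    2 ^ t ≤ 2 * D.fold max 0 :=
  no_overshoot_general L D c Sest herr t htL hcond
end

section
/- Combined error bound for the one-round clipping protocol: let D be a nonempty finite multiset of integers in {0,...,U}, let S_j = Sum(D ∩ [2^{j-1}+1,2^j]), and suppose estimates S̃_j satisfy |S̃_j − S_j| ≤ c·2^j for all j = 0,...,log₂ U. Let t be the largest j with S̃_j > c·2^j (τ = 2^t), and output S̃ = Σ_{j=0}^{t} S̃_j. Then |S̃ − Sum(D)| ≤ |Σ_{j=0}^{t}(S̃_j − S_j)| + Σ_{j>t} S_j ≤ 4c·Max(D) + 8c·Max(D) = 12c·Max(D). -/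
/-!
Cut the data into the dyadic bands `(2^(j-1), 2^j]`, so that `Sum(D) = Σ_j S_j`. The output
misses `Sum(D)` by the accumulated estimation error on the bands `j ≤ t` plus the discarded
sums `S_j`, `j > t`. Since `S̃_t > c·2^t`, the band `t` is nonempty, so `2^t < 2·Max(D)` and the
error, a geometric sum, is below `c·2^(t+1) ≤ 4c·Max(D)`. A discarded band has
`S_j ≤ S̃_j + c·2^j ≤ 2c·2^j`, and only bands with `2^j < 2·Max(D)` are nonempty, so the
discarded sums total at most `2c·4·Max(D)`.
-/

open Finset

theorem Multiset.le_fold_max {α : Type*} [LinearOrder α] {s : Multiset α} {a : α} (b : α)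
    (h : a ∈ s) : a ≤ s.fold max b := by
  obtain ⟨s, rfl⟩ := Multiset.exists_cons_of_mem h
  rw [Multiset.fold_cons_left]
  exact le_max_left _ _

theorem Nat.two_pow_div_two_lt_and_le_two_pow_iff {a j : ℕ} (ha : 0 < a) :
    2 ^ j / 2 < a ∧ a ≤ 2 ^ j ↔ j = Nat.clog 2 a := by
  have hlow : 2 ^ j / 2 < a ↔ j ≤ Nat.clog 2 a := by
    cases j with
    | zero => simp [ha]
    | succ k =>
      rw [pow_succ, Nat.mul_div_cancel _ two_pos, Nat.succ_le_iff,
        Nat.lt_clog_iff_pow_lt one_lt_two]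
  rw [hlow, ← Nat.clog_le_iff_le_pow one_lt_two]
  omega

theorem sum_range_ite_dyadic_band {a L : ℕ} (ha : a ≤ 2 ^ L) :
    ∑ j ∈ range (L + 1), (if 2 ^ j / 2 < a ∧ a ≤ 2 ^ j then a else 0) = a := by
  rcases Nat.eq_zero_or_pos a with rfl | ha₀
  · simp
  simp_rw [Nat.two_pow_div_two_lt_and_le_two_pow_iff ha₀, sum_ite_eq', mem_range,
    Nat.lt_succ_iff, Nat.clog_le_iff_le_pow one_lt_two, if_pos ha]

theorem sum_two_pow_filter_lt_le (s : Finset ℕ) {B : ℝ} (hB : 0 ≤ B) :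
    ∑ j ∈ s with (2 : ℝ) ^ j < B, (2 : ℝ) ^ j ≤ 2 * B := by
  set s' := s.filter fun j => (2 : ℝ) ^ j < B
  rcases s'.eq_empty_or_nonempty with h | h
  · rw [h, sum_empty]
    positivity
  have hmax : (2 : ℝ) ^ s'.max' h < B := (mem_filter.1 (s'.max'_mem h)).2
  calc ∑ j ∈ s', (2 : ℝ) ^ j = ((∑ j ∈ s', 2 ^ j : ℕ) : ℝ) := by push_cast; rfl
    _ ≤ ((2 ^ (s'.max' h + 1) : ℕ) : ℝ) := by
      exact_mod_cast (Nat.geomSum_lt le_rfl fun k hk => Nat.lt_succ_of_le (s'.le_max' k hk)).le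
    _ ≤ 2 * B := by
      push_cast
      rw [pow_succ]
      linarith

theorem abs_sum_range_le_of_abs_le_two_pow {e : ℕ → ℝ} {c : ℝ} {t : ℕ} (hc : 0 ≤ c)
    (he : ∀ j ≤ t, |e j| ≤ c * 2 ^ j) :
    |∑ j ∈ range (t + 1), e j| ≤ c * 2 ^ (t + 1) := by
  have hgeom : ∑ j ∈ range (t + 1), (2 : ℝ) ^ j ≤ 2 ^ (t + 1) := by
    exact_mod_cast (Nat.geomSum_lt le_rfl fun k hk => mem_range.1 hk).le
  calc |∑ j ∈ range (t + 1), e j| ≤ ∑ j ∈ range (t + 1), |e j| := abs_sum_le_sum_abs _ _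
    _ ≤ ∑ j ∈ range (t + 1), c * 2 ^ j :=
      sum_le_sum fun j hj => he j (Nat.lt_succ_iff.1 (mem_range.1 hj))
    _ ≤ c * 2 ^ (t + 1) := by
      rw [← mul_sum]
      exact mul_le_mul_of_nonneg_left hgeom hc

theorem abs_sum_range_sub_sum_range_le {S Sest : ℕ → ℝ} {m n : ℕ} (hmn : m ≤ n)
    (hS : ∀ j, 0 ≤ S j) :
    |∑ j ∈ range m, Sest j - ∑ j ∈ range n, S j| ≤
      |∑ j ∈ range m, (Sest j - S j)| + ∑ j ∈ Ico m n, S j := by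
  rw [← sum_range_add_sum_Ico S hmn, sum_sub_distrib, ← sub_sub]
  calc _ ≤ |∑ j ∈ range m, Sest j - ∑ j ∈ range m, S j| + |∑ j ∈ Ico m n, S j| :=
        abs_sub _ _
    _ = _ := by rw [abs_of_nonneg (sum_nonneg fun j _ => hS j)]

/-- The sum `S_j` of the elements of `D` in the dyadic band `(2^(j-1), 2^j]`; for `j = 0`
the band is `(0, 1]` because `2^0 / 2 = 0` in `ℕ`. -/
def dyadicSum (D : Multiset ℕ) (j : ℕ) : ℕ :=
  (D.filter fun x => 2 ^ j / 2 < x ∧ x ≤ 2 ^ j).sum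

theorem dyadicSum_cons (a : ℕ) (D : Multiset ℕ) (j : ℕ) :
    dyadicSum (a ::ₘ D) j = (if 2 ^ j / 2 < a ∧ a ≤ 2 ^ j then a else 0) + dyadicSum D j := by
  rw [dyadicSum, Multiset.filter_cons, Multiset.sum_add]
  split_ifs <;> simp [dyadicSum]

theorem sum_range_dyadicSum {L : ℕ} {D : Multiset ℕ} (hD : ∀ x ∈ D, x ≤ 2 ^ L) :
    ∑ j ∈ range (L + 1), dyadicSum D j = D.sum := by
  induction D using Multiset.induction_on with
  | empty => simp [dyadicSum]
  | cons a D ih =>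
    simp only [dyadicSum_cons, sum_add_distrib, Multiset.sum_cons,
      sum_range_ite_dyadic_band (hD a (Multiset.mem_cons_self a D)),
      ih fun x hx => hD x (Multiset.mem_cons_of_mem hx)]

theorem two_pow_lt_of_dyadicSum_ne_zero {D : Multiset ℕ} {M : ℝ}
    (hM : ∀ x ∈ D, (x : ℝ) ≤ M) {j : ℕ} (hj : dyadicSum D j ≠ 0) :
    (2 : ℝ) ^ j < 2 * M := by
  have hband : D.filter (fun x => 2 ^ j / 2 < x ∧ x ≤ 2 ^ j) ≠ 0 := fun h =>
    hj (by rw [dyadicSum, h, Multiset.sum_zero])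
  obtain ⟨x, hx⟩ := Multiset.exists_mem_of_ne_zero hband
  obtain ⟨hxD, hlow, -⟩ := Multiset.mem_filter.1 hx
  have hjx : 2 ^ j < 2 * x := by omega
  calc (2 : ℝ) ^ j < 2 * x := by exact_mod_cast hjx
    _ ≤ 2 * M := by linarith [hM x hxD]

theorem sum_dyadicSum_le_of_le_two_pow {D : Multiset ℕ} {M c : ℝ}
    (hM : ∀ x ∈ D, (x : ℝ) ≤ M) (hM₀ : 0 ≤ M) (hc : 0 ≤ c) {s : Finset ℕ}
    (hs : ∀ j ∈ s, (dyadicSum D j : ℝ) ≤ 2 * c * 2 ^ j) :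
    ∑ j ∈ s, (dyadicSum D j : ℝ) ≤ 8 * c * M := by
  have hsupp : ∀ j ∈ s, (dyadicSum D j : ℝ) ≠ 0 → (2 : ℝ) ^ j < 2 * M := fun j _ hj =>
    two_pow_lt_of_dyadicSum_ne_zero hM (mod_cast hj)
  rw [← sum_filter_of_ne hsupp]
  calc ∑ j ∈ s with (2 : ℝ) ^ j < 2 * M, (dyadicSum D j : ℝ)
      ≤ ∑ j ∈ s with (2 : ℝ) ^ j < 2 * M, 2 * c * 2 ^ j :=
        sum_le_sum fun j hj => hs j (mem_filter.1 hj).1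
    _ ≤ 2 * c * (2 * (2 * M)) := by
      rw [← mul_sum]
      gcongr
      exact sum_two_pow_filter_lt_le s (by positivity)
    _ = 8 * c * M := by ring

theorem one_round_clipping_error_general (L : ℕ) (D : Multiset ℕ)
    (hD : ∀ x ∈ D, x ≤ 2 ^ L) (c : ℝ) (hc : 0 ≤ c)
    (Sest : ℕ → ℝ)
    (herr : ∀ j ≤ L,
      |Sest j - ((D.filter (fun x => 2 ^ j / 2 < x ∧ x ≤ 2 ^ j)).sum : ℝ)| ≤ c * 2 ^ j)
    (t : ℕ) (htL : t ≤ L) (hcond : c * 2 ^ t < Sest t)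
    (hlast : ∀ j ≤ L, t < j → ¬ (c * 2 ^ j < Sest j)) :
    |(∑ j ∈ Finset.range (t + 1), Sest j) - (D.sum : ℝ)| ≤
      12 * c * (D.fold max 0 : ℝ) := by
  -- the coercion makes `(D.fold max 0 : ℝ)` the fold over the image `D >>= pure ∘ (↑)` in `ℝ`
  set M : ℝ := D.fold max 0
  have hM : ∀ x ∈ D, (x : ℝ) ≤ M := fun x hx =>
    Multiset.le_fold_max 0 (Multiset.mem_bind.2 ⟨x, hx, Multiset.mem_singleton_self _⟩)
  change ∀ j ≤ L, |Sest j - dyadicSum D j| ≤ c * 2 ^ j at herr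
  have hband : dyadicSum D t ≠ 0 := fun h => by
    have := herr t htL
    rw [h, Nat.cast_zero, sub_zero] at this
    linarith [le_abs_self (Sest t)]
  have hτ : (2 : ℝ) ^ t < 2 * M := two_pow_lt_of_dyadicSum_ne_zero hM hband
  have hhead : |∑ j ∈ range (t + 1), (Sest j - dyadicSum D j)| ≤ 4 * c * M := by
    refine (abs_sum_range_le_of_abs_le_two_pow hc fun j hj => herr j (hj.trans htL)).trans ?_
    rw [pow_succ]
    nlinarith
  have htail : ∑ j ∈ Ico (t + 1) (L + 1), (dyadicSum D j : ℝ) ≤ 8 * c * M := by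
    have hM₀ : 0 ≤ M := by linarith [pow_pos (two_pos : (0 : ℝ) < 2) t]
    refine sum_dyadicSum_le_of_le_two_pow hM hM₀ hc fun j hj => ?_
    obtain ⟨htj, hjL⟩ := mem_Ico.1 hj
    have hjL : j ≤ L := Nat.lt_succ_iff.1 hjL
    linarith [(abs_le.1 (herr j hjL)).1, not_lt.1 (hlast j hjL htj)]
  rw [← sum_range_dyadicSum hD, Nat.cast_sum]
  calc _ ≤ _ := abs_sum_range_sub_sum_range_le (by omega) fun j => Nat.cast_nonneg _
    _ ≤ 4 * c * M + 8 * c * M := add_le_add hhead htail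
    _ = 12 * c * M := by ring

/-- Combined error bound for the one-round clipping protocol. Let `D` be a
nonempty finite multiset of integers in `{0,...,2^L}`, with dyadic sub-domain sums
`S j = Sum(D ∩ [2^(j-1)+1, 2^j])` (in ℕ the interval is `{x | 2^j / 2 < x ∧ x ≤ 2^j}`),
and estimates `Sest j` satisfying `|Sest j − S j| ≤ c·2^j` for all `j ≤ L`. Let `t ≤ L`
be the largest index with `Sest t > c·2^t`, and output `Σ_{j=0}^{t} Sest j`. Then the
output differs from `Sum(D)` by at most `12·c·Max(D)`. -/
theorem one_round_clipping_error (L : ℕ) (D : Multiset ℕ) (hne : D ≠ 0)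
    (hD : ∀ x ∈ D, x ≤ 2 ^ L) (c : ℝ) (hc : 0 ≤ c)
    (Sest : ℕ → ℝ)
    (herr : ∀ j ≤ L,
      |Sest j - ((D.filter (fun x => 2 ^ j / 2 < x ∧ x ≤ 2 ^ j)).sum : ℝ)| ≤ c * 2 ^ j)
    (t : ℕ) (htL : t ≤ L) (hcond : c * 2 ^ t < Sest t)
    (hlast : ∀ j ≤ L, t < j → ¬ (c * 2 ^ j < Sest j)) :
    |(∑ j ∈ Finset.range (t + 1), Sest j) - (D.sum : ℝ)| ≤
      12 * c * (D.fold max 0 : ℝ) :=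
  one_round_clipping_error_general L D hD c hc Sest herr t htL hcond hlast
end
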